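/- arXiv:math/0011060 — 2 statements merged into one kernel-verified Lean document; each statement's English description precedes it below -/
import Mathlib

section
/- Let p : 2^I → ℝ be a nonzero twisted Pfaffian map. Then the collection B = {S ⊆ I : p(S) ≠ 0} is a Δ-matroid, and moreover sign ∘ p is an oriented even Δ-matroid. -/
/-!
In the exchange relation for `A Δ {i}` and `B Δ {i}`, the term at `i` is `± p(A) p(B) ≠ 0`, so
some other term, at `j ≠ i`, is nonzero as well; it makes `A Δ {i, j}` a set where `p` is nonzero.
For the orientation: if the signs of `w κ_j` are all nonnegative, then the real numbers `w κ_j`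
are nonnegative with sum zero, hence all zero.
-/

/-- The Pfaffian of an `N × N` matrix (intended for skew-symmetric matrices):
`Pf(A) = ∑_{σ ∈ S'_N} sign(σ) ∏_{k=1}^{N/2} a_{σ(2k-1) σ(2k)}`, where `S'_N` is the
set of permutations `σ` of `{0, …, N-1}` such that `σ(2k)` is minimal among
`σ(2k), σ(2k+1), …, σ(N-1)` for each `k`.  It is `0` for odd `N` and `1` for `N = 0`. -/
noncomputable def pfaffian {N : ℕ} (A : Matrix (Fin N) (Fin N) ℝ) : ℝ :=
  if h : 2 ∣ N then
    ∑ σ ∈ Finset.univ.filter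
        (fun σ : Equiv.Perm (Fin N) =>
          ∀ p q : Fin N, 2 ∣ (p : ℕ) → p ≤ q → σ p ≤ σ q),
      ((Equiv.Perm.sign σ : ℤ) : ℝ) *
        ∏ k : Fin (N / 2),
          A (σ ⟨2 * (k : ℕ), by have := k.2; omega⟩)
            (σ ⟨2 * (k : ℕ) + 1, by have := k.2; omega⟩)
  else 0

/-- The Pfaffian of the principal minor of `A` indexed by the subset `S`,
with rows and columns of the minor taken in increasing order of index. -/
noncomputable def pfMinor {n : ℕ} (A : Matrix (Fin n) (Fin n) ℝ) (S : Finset (Fin n)) : ℝ :=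
  pfaffian (Matrix.of fun p q : Fin S.card =>
    A ((S.orderIsoOfFin rfl p : S) : Fin n) ((S.orderIsoOfFin rfl q : S) : Fin n))


/-- A **twisted Pfaffian map** on subsets of `{1,…,n}` (with real values):
it is not identically zero, any two sets with nonzero value have cardinalities of
equal parity, and it satisfies the Pfaffian exchange relation: whenever
`A Δ B = {i₁ < … < i_l}`, `∑_{j=1}^l (−1)^j p(A Δ {i_j}) p(B Δ {i_j}) = 0`. -/
def IsTwistedPfaffianMap {n : ℕ} (p : Finset (Fin n) → ℝ) : Prop :=
  (∃ S, p S ≠ 0) ∧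
  (∀ A B : Finset (Fin n), p A ≠ 0 → p B ≠ 0 → A.card % 2 = B.card % 2) ∧
  (∀ A B : Finset (Fin n),
    ∑ j : Fin (symmDiff A B).card,
      (-1 : ℝ) ^ ((j : ℕ) + 1) *
        p (symmDiff A {((symmDiff A B).orderIsoOfFin rfl j : Fin n)}) *
        p (symmDiff B {((symmDiff A B).orderIsoOfFin rfl j : Fin n)}) = 0)

/-- An **oriented even Δ-matroid** on `I = {1,…,n}`: a map
`p : 2^I → {+1, −1, 0}` such that (1) `p` is not identically zero; (2) any two sets
with nonzero value have cardinalities of equal parity; (3) whenever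
`A Δ B = {i₁ < … < i_l}` and, for some `w ∈ {+1, −1}`, all the quantities
`κ_j = w (−1)^j p(A Δ {i_j}) p(B Δ {i_j})` are nonnegative, they are all zero. -/
def IsOrientedEvenDeltaMatroid {n : ℕ} (p : Finset (Fin n) → SignType) : Prop :=
  (∃ S, p S ≠ 0) ∧
  (∀ A B : Finset (Fin n), p A ≠ 0 → p B ≠ 0 → A.card % 2 = B.card % 2) ∧
  (∀ A B : Finset (Fin n), ∀ w : SignType, (w = 1 ∨ w = -1) →
    (∀ j : Fin (symmDiff A B).card,
      0 ≤ w * (-1 : SignType) ^ ((j : ℕ) + 1) *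
        p (symmDiff A {((symmDiff A B).orderIsoOfFin rfl j : Fin n)}) *
        p (symmDiff B {((symmDiff A B).orderIsoOfFin rfl j : Fin n)})) →
    (∀ j : Fin (symmDiff A B).card,
      w * (-1 : SignType) ^ ((j : ℕ) + 1) *
        p (symmDiff A {((symmDiff A B).orderIsoOfFin rfl j : Fin n)}) *
        p (symmDiff B {((symmDiff A B).orderIsoOfFin rfl j : Fin n)}) = 0))

open Finset
open scoped symmDiff

theorem Finset.exists_ne_and_ne_zero_of_sum_eq_zero {ι M : Type*} [AddCommMonoid M]
    {s : Finset ι} {f : ι → M} (hsum : ∑ i ∈ s, f i = 0) {a : ι} (ha : a ∈ s) (hfa : f a ≠ 0) :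
    ∃ b ∈ s, b ≠ a ∧ f b ≠ 0 := by
  by_contra! h
  exact hfa (by rwa [sum_eq_single_of_mem a ha h] at hsum)

theorem Finset.eq_zero_of_sum_eq_zero_of_sign_mul_nonneg {ι : Type*} {s : Finset ι} {f : ι → ℝ}
    (hsum : ∑ i ∈ s, f i = 0) {w : SignType} (hw : w = 1 ∨ w = -1)
    (h : ∀ i ∈ s, 0 ≤ w * SignType.sign (f i)) : ∀ i ∈ s, f i = 0 := by
  rcases hw with rfl | rfl
  · simp_rw [one_mul, sign_nonneg_iff] at h
    exact (sum_eq_zero_iff_of_nonneg h).1 hsum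
  · simp_rw [neg_one_mul, ← Left.sign_neg, sign_nonneg_iff, neg_nonneg] at h
    exact (sum_eq_zero_iff_of_nonpos h).1 hsum

theorem Finset.symmDiff_singleton_singleton {α : Type*} [DecidableEq α] {i j : α} (h : i ≠ j) :
    ({i} : Finset α) ∆ {j} = {i, j} := by
  rw [(disjoint_singleton.2 h).symmDiff_eq_sup, sup_eq_union, insert_eq]

theorem symmDiff_symmDiff_symmDiff_cancel_right {α : Type*} [GeneralizedBooleanAlgebra α]
    (a b c : α) : (a ∆ c) ∆ (b ∆ c) = a ∆ b := by
  rw [symmDiff_symmDiff_symmDiff_comm, symmDiff_self, symmDiff_bot]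

namespace IsTwistedPfaffianMap

variable {n : ℕ} {M : Type*} [Monoid M] [HasDistribNeg M]

/-- The summands of the exchange relation for `A, B`; positions in `A Δ B` are counted from `0`,
hence the exponent `j + 1`. -/
def exchangeTerm (p : Finset (Fin n) → M) (A B : Finset (Fin n)) (j : Fin (A ∆ B).card) : M :=
  (-1) ^ ((j : ℕ) + 1) * p (A ∆ {((A ∆ B).orderIsoOfFin rfl j : Fin n)}) *
    p (B ∆ {((A ∆ B).orderIsoOfFin rfl j : Fin n)})

theorem mul_exchangeTerm (w : M) (p : Finset (Fin n) → M) (A B : Finset (Fin n))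
    (j : Fin (A ∆ B).card) :
    w * exchangeTerm p A B j = w * (-1) ^ ((j : ℕ) + 1) *
      p (A ∆ {((A ∆ B).orderIsoOfFin rfl j : Fin n)}) *
        p (B ∆ {((A ∆ B).orderIsoOfFin rfl j : Fin n)}) := by
  simp only [exchangeTerm, mul_assoc]

theorem exchangeTerm_ne_zero_iff {R : Type*} [Ring R] [IsDomain R]
    {p : Finset (Fin n) → R} {A B : Finset (Fin n)} {j : Fin (A ∆ B).card} :
    exchangeTerm p A B j ≠ 0 ↔
      p (A ∆ {((A ∆ B).orderIsoOfFin rfl j : Fin n)}) ≠ 0 ∧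
        p (B ∆ {((A ∆ B).orderIsoOfFin rfl j : Fin n)}) ≠ 0 := by
  simp [exchangeTerm, not_or]

theorem sign_exchangeTerm (p : Finset (Fin n) → ℝ) (A B : Finset (Fin n)) (j : Fin (A ∆ B).card) :
    SignType.sign (exchangeTerm p A B j) = exchangeTerm (fun S => SignType.sign (p S)) A B j := by
  simp [exchangeTerm, sign_mul, sign_pow]

variable {p : Finset (Fin n) → ℝ}

theorem sum_exchangeTerm (hp : IsTwistedPfaffianMap p) (A B : Finset (Fin n)) :
    ∑ j, exchangeTerm p A B j = 0 :=
  hp.2.2 A B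

theorem exists_ne_symmDiff_singleton_ne_zero (hp : IsTwistedPfaffianMap p) {A B : Finset (Fin n)}
    {i : Fin n} (hi : i ∈ A ∆ B) (hAi : p (A ∆ {i}) ≠ 0) (hBi : p (B ∆ {i}) ≠ 0) :
    ∃ j ∈ A ∆ B, j ≠ i ∧ p (A ∆ {j}) ≠ 0 ∧ p (B ∆ {j}) ≠ 0 := by
  set e := (A ∆ B).orderIsoOfFin rfl
  have hi_term : exchangeTerm p A B (e.symm ⟨i, hi⟩) ≠ 0 := by
    rw [exchangeTerm_ne_zero_iff, e.apply_symm_apply]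
    exact ⟨hAi, hBi⟩
  obtain ⟨j, -, hji, hj_term⟩ :=
    exists_ne_and_ne_zero_of_sum_eq_zero (hp.sum_exchangeTerm A B) (mem_univ _) hi_term
  refine ⟨e j, (e j).2, fun h => hji (e.symm_apply_eq.2 (Subtype.ext h.symm)).symm, ?_⟩
  exact exchangeTerm_ne_zero_iff.1 hj_term

theorem exists_symmDiff_pair_ne_zero (hp : IsTwistedPfaffianMap p) {A B : Finset (Fin n)}
    (hA : p A ≠ 0) (hB : p B ≠ 0) {i : Fin n} (hi : i ∈ A ∆ B) :
    ∃ j ∈ B ∆ A, p (A ∆ {i, j}) ≠ 0 := by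
  obtain ⟨j, hj, hji, hAj, -⟩ := hp.exists_ne_symmDiff_singleton_ne_zero (A := A ∆ {i}) (B := B ∆ {i})
    (by rwa [symmDiff_symmDiff_symmDiff_cancel_right])
    (by rwa [symmDiff_symmDiff_cancel_right]) (by rwa [symmDiff_symmDiff_cancel_right])
  refine ⟨j, by rwa [symmDiff_comm, ← symmDiff_symmDiff_symmDiff_cancel_right _ _ {i}], ?_⟩
  rwa [← symmDiff_singleton_singleton hji.symm, ← symmDiff_assoc]

theorem isOrientedEvenDeltaMatroid_sign (hp : IsTwistedPfaffianMap p) :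
    IsOrientedEvenDeltaMatroid (fun S => SignType.sign (p S)) := by
  obtain ⟨⟨S, hS⟩, hpar, -⟩ := id hp
  refine ⟨⟨S, sign_ne_zero.2 hS⟩, fun A B hA hB => hpar A B (sign_ne_zero.1 hA) (sign_ne_zero.1 hB),
    fun A B w hw hnn j => ?_⟩
  have hzero := eq_zero_of_sum_eq_zero_of_sign_mul_nonneg (hp.sum_exchangeTerm A B) hw
    (fun j _ => by rw [sign_exchangeTerm, mul_exchangeTerm]; exact hnn j)
  rw [← mul_exchangeTerm w (fun S => SignType.sign (p S)), ← sign_exchangeTerm,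
    hzero j (mem_univ j), sign_zero, mul_zero]

end IsTwistedPfaffianMap

/-- Let `p` be a (nonzero) twisted Pfaffian map on subsets of `I = {1,…,n}`.  Then
the collection `ℬ = {S : p S ≠ 0}` is a Δ-matroid (it satisfies the symmetric
exchange axiom), and moreover `sign ∘ p` is an oriented even Δ-matroid. -/
theorem twistedPfaffianMap_deltaMatroid_and_oriented {n : ℕ}
    (p : Finset (Fin n) → ℝ) (hp : IsTwistedPfaffianMap p) :
    (∀ A : Finset (Fin n), p A ≠ 0 → ∀ B : Finset (Fin n), p B ≠ 0 →
      ∀ i ∈ symmDiff A B, ∃ j ∈ symmDiff B A, p (symmDiff A {i, j}) ≠ 0) ∧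
    IsOrientedEvenDeltaMatroid (fun S => SignType.sign (p S)) :=
  ⟨fun _ hA _ hB _ hi => hp.exists_symmDiff_pair_ne_zero hA hB hi,
    hp.isOrientedEvenDeltaMatroid_sign⟩
end

section
/- Lagrangian symplectic matroids on J are exactly symmetric matroids: a collection B of admissible n-subsets of J is a Lagrangian matroid (Gale-maximality for all B_n-admissible orderings) if and only if it satisfies the symmetric exchange axiom: for A, B ∈ B and i ∈ A Δ B there exists j ∈ B Δ A with A Δ {i, j, i*, j*} ∈ B. -/
/-- We model `J = {1,…,n, 1*,…,n*}` as `Fin n ⊕ Fin n`, with `Sum.inl i` the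
unstarred element `i` and `Sum.inr i` the starred element `i*`.  The involution `*`
is `Sum.swap`.  A set `S ⊆ J` is **admissible** if `S ∩ S* = ∅`. -/
def JAdmissible {n : ℕ} (S : Finset (Fin n ⊕ Fin n)) : Prop :=
  ∀ x ∈ S, Sum.swap x ∉ S

/-- An admissible `n`-tuple `(a₁, …, a_n)` of elements of `J`: the `a_i` are
pairwise distinct and no `a_i` is the star of any `a_j` (so `{a₁,…,a_n}` is an
admissible transversal of `J`). -/
def IsAdmissibleTuple {n : ℕ} (a : Fin n → Fin n ⊕ Fin n) : Prop :=
  Function.Injective a ∧ ∀ i j, a i ≠ Sum.swap (a j)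

open Classical in
/-- The level of `x ∈ J` in the (partial or total) admissible ordering determined by
the admissible tuple `a`: the element `a_i` has level `i` (for `0 ≤ i < n`) and its
star `a_i*` has level `2n − 1 − i`. -/
noncomputable def lvl {n : ℕ} (a : Fin n → Fin n ⊕ Fin n) (x : Fin n ⊕ Fin n) : ℕ :=
  if h : ∃ i, a i = x then (h.choose : ℕ)
  else if h2 : ∃ i, a i = Sum.swap x then 2 * n - 1 - (h2.choose : ℕ)
  else 0

/-- The `B_n`-admissible (total) ordering of `J` determined by the admissible tuple
`a`:  `a₁ ≺ ⋯ ≺ a_n ≺ a_n* ≺ ⋯ ≺ a₁*`. -/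
def BnLe {n : ℕ} (a : Fin n → Fin n ⊕ Fin n) (x y : Fin n ⊕ Fin n) : Prop :=
  x = y ∨ lvl a x < lvl a y

/-- The `D_n`-admissible (partial) ordering of `J` determined by the admissible
tuple `a`:  `a₁ ≺ ⋯ ≺ a_{n-1} ≺ {a_n, a_n*} ≺ a_{n-1}* ≺ ⋯ ≺ a₁*`, where `a_n` and
`a_n*` (the elements of levels `n−1` and `n`) are incomparable. -/
def DnLe {n : ℕ} (a : Fin n → Fin n ⊕ Fin n) (x y : Fin n ⊕ Fin n) : Prop :=
  x = y ∨ (lvl a x < lvl a y ∧ ¬(lvl a x = n - 1 ∧ lvl a y = n))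

/-- The Gale order on equicardinal finite subsets of `J` induced by an ordering
`le` of `J`:  `A ≼ B` iff there is a bijection `φ` of `J` mapping `A` into `B` with
`x ≼ φ x` for all `x ∈ A` (for total orders this is the usual "sorted elements
dominate" Gale order). -/
def GaleLe {n : ℕ} (le : (Fin n ⊕ Fin n) → (Fin n ⊕ Fin n) → Prop)
    (A B : Finset (Fin n ⊕ Fin n)) : Prop :=
  ∃ φ : Equiv.Perm (Fin n ⊕ Fin n), (∀ x ∈ A, φ x ∈ B) ∧ ∀ x ∈ A, le x (φ x)

namespace LagAux

variable {n : ℕ} {a : Fin n → Fin n ⊕ Fin n}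

lemma swap_ne (x : Fin n ⊕ Fin n) : Sum.swap x ≠ x := by cases x <;> simp

lemma lvl_apply (ha : IsAdmissibleTuple a) (k : Fin n) : lvl a (a k) = k := by
  have h : ∃ i, a i = a k := ⟨k, rfl⟩
  rw [lvl, dif_pos h]
  exact congrArg Fin.val (ha.1 h.choose_spec)

lemma lvl_swap_apply (ha : IsAdmissibleTuple a) (k : Fin n) :
    lvl a (Sum.swap (a k)) = 2 * n - 1 - k := by
  have h1 : ¬ ∃ i, a i = Sum.swap (a k) := by rintro ⟨i, hi⟩; exact ha.2 i k hi
  have h2 : ∃ i, a i = Sum.swap (Sum.swap (a k)) := ⟨k, by simp⟩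
  rw [lvl, dif_neg h1, dif_pos h2]
  have : a h2.choose = a k := by rw [h2.choose_spec, Sum.swap_swap]
  have hc : (h2.choose : ℕ) = (k : ℕ) := congrArg Fin.val (ha.1 this)
  omega

lemma cover (ha : IsAdmissibleTuple a) (x : Fin n ⊕ Fin n) :
    ∃ k, a k = x ∨ a k = Sum.swap x := by
  have hg : Function.Injective
      (Sum.elim a (fun k => Sum.swap (a k)) : Fin n ⊕ Fin n → Fin n ⊕ Fin n) := by
    rintro (p | p) (q | q) h <;> simp only [Sum.elim_inl, Sum.elim_inr] at h
    · exact congrArg Sum.inl (ha.1 h)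
    · exact absurd h (ha.2 p q)
    · exact absurd h.symm (ha.2 q p)
    · exact congrArg Sum.inr (ha.1 (Sum.swap_leftInverse.injective h))
  obtain ⟨y, hy⟩ := Finite.injective_iff_surjective.mp hg x
  cases y with
  | inl k => exact ⟨k, Or.inl hy⟩
  | inr k =>
    refine ⟨k, Or.inr ?_⟩
    simp only [Sum.elim_inr] at hy
    rw [← hy, Sum.swap_swap]

lemma lvl_lt (ha : IsAdmissibleTuple a) (x : Fin n ⊕ Fin n) : lvl a x < 2 * n := by
  obtain ⟨k, hk | hk⟩ := cover ha x
  · rw [← hk, lvl_apply ha]; have := k.isLt; omega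
  · have : x = Sum.swap (a k) := by rw [hk, Sum.swap_swap]
    rw [this, lvl_swap_apply ha]; have := k.isLt; omega

lemma lvl_swap (ha : IsAdmissibleTuple a) (x : Fin n ⊕ Fin n) :
    lvl a (Sum.swap x) = 2 * n - 1 - lvl a x := by
  obtain ⟨k, hk | hk⟩ := cover ha x
  · rw [← hk, lvl_apply ha, lvl_swap_apply ha]
  · have hx : x = Sum.swap (a k) := by rw [hk, Sum.swap_swap]
    rw [hx, Sum.swap_swap, lvl_apply ha, lvl_swap_apply ha]
    have := k.isLt; omega

lemma lvl_injective (ha : IsAdmissibleTuple a) : Function.Injective (lvl a) := by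
  intro x y h
  obtain ⟨k, hk | hk⟩ := cover ha x <;> obtain ⟨l, hl | hl⟩ := cover ha y
  · rw [← hk, ← hl, lvl_apply ha, lvl_apply ha] at h
    rw [← hk, ← hl, Fin.ext h]
  · have hy : y = Sum.swap (a l) := by rw [hl, Sum.swap_swap]
    rw [← hk, lvl_apply ha] at h
    rw [hy, lvl_swap_apply ha] at h
    have := k.isLt; have := l.isLt; omega
  · have hx : x = Sum.swap (a k) := by rw [hk, Sum.swap_swap]
    rw [hx, lvl_swap_apply ha] at h
    rw [← hl, lvl_apply ha] at h
    have := k.isLt; have := l.isLt; omega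
  · have hx : x = Sum.swap (a k) := by rw [hk, Sum.swap_swap]
    have hy : y = Sum.swap (a l) := by rw [hl, Sum.swap_swap]
    rw [hx, hy, lvl_swap_apply ha, lvl_swap_apply ha] at h
    have := k.isLt; have := l.isLt
    have hkl : k = l := Fin.ext (by omega)
    rw [hx, hy, hkl]

lemma bnle_refl (x : Fin n ⊕ Fin n) : BnLe a x x := Or.inl rfl

lemma bnle_trans {x y z : Fin n ⊕ Fin n} (h1 : BnLe a x y) (h2 : BnLe a y z) :
    BnLe a x z := by
  rcases h1 with rfl | h1
  · exact h2
  · rcases h2 with rfl | h2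
    · exact Or.inr h1
    · exact Or.inr (h1.trans h2)

lemma galele_refl (S : Finset (Fin n ⊕ Fin n)) : GaleLe (BnLe a) S S :=
  ⟨Equiv.refl _, fun x hx => hx, fun _ _ => Or.inl rfl⟩

lemma galele_trans {S T U : Finset (Fin n ⊕ Fin n)}
    (h1 : GaleLe (BnLe a) S T) (h2 : GaleLe (BnLe a) T U) : GaleLe (BnLe a) S U := by
  obtain ⟨φ, hφ1, hφ2⟩ := h1
  obtain ⟨ψ, hψ1, hψ2⟩ := h2
  refine ⟨φ.trans ψ, fun x hx => hψ1 _ (hφ1 x hx), fun x hx => ?_⟩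
  exact bnle_trans (hφ2 x hx) (hψ2 _ (hφ1 x hx))

lemma mem_or_swap_mem {S : Finset (Fin n ⊕ Fin n)} (hcard : S.card = n)
    (hS : JAdmissible S) (x : Fin n ⊕ Fin n) : x ∈ S ∨ Sum.swap x ∈ S := by
  classical
  set pr : Fin n ⊕ Fin n → Fin n := Sum.elim id id with hpr
  have hinj : Set.InjOn pr S := by
    intro x hx y hy h
    by_contra hne
    have : y = Sum.swap x := by
      cases x <;> cases y <;> simp_all [pr]
    exact hS x hx (this ▸ hy)
  have hcardim : (S.image pr).card = n := by
    rw [Finset.card_image_of_injOn hinj, hcard]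
  have huniv : S.image pr = Finset.univ := by
    apply Finset.eq_univ_of_card
    simpa using hcardim
  have : pr x ∈ S.image pr := by rw [huniv]; exact Finset.mem_univ _
  obtain ⟨y, hy, hyx⟩ := Finset.mem_image.mp this
  have : y = x ∨ y = Sum.swap x := by
    cases x <;> cases y <;> simp_all [pr]
  rcases this with rfl | h
  · exact Or.inl hy
  · rw [h] at hy; exact Or.inr hy

lemma count_le {S M : Finset (Fin n ⊕ Fin n)} (h : GaleLe (BnLe a) S M) (τ : ℕ) :
    (S.filter (fun x => τ ≤ lvl a x)).card ≤ (M.filter (fun x => τ ≤ lvl a x)).card := by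
  classical
  obtain ⟨φ, h1, h2⟩ := h
  apply Finset.card_le_card_of_injOn φ
  · intro x hx
    simp only [Finset.mem_coe, Finset.mem_filter] at hx ⊢
    refine ⟨h1 x hx.1, ?_⟩
    rcases h2 x hx.1 with h | h
    · rw [← h]; exact hx.2
    · omega
  · exact φ.injective.injOn


set_option maxHeartbeats 2000000 in
lemma exchange_to_max (ℬ : Set (Finset (Fin n ⊕ Fin n))) (hne : ℬ.Nonempty)
    (hadm : ∀ S ∈ ℬ, S.card = n ∧ JAdmissible S)
    (hex : ∀ A ∈ ℬ, ∀ B ∈ ℬ, ∀ i ∈ symmDiff A B, ∃ j ∈ symmDiff B A,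
      symmDiff A {i, j, Sum.swap i, Sum.swap j} ∈ ℬ)
    (a : Fin n → Fin n ⊕ Fin n) (ha : IsAdmissibleTuple a) :
    ∃ M ∈ ℬ, ∀ S ∈ ℬ, GaleLe (BnLe a) S M := by
  classical
  set w : Finset (Fin n ⊕ Fin n) → ℕ := fun S => ∑ x ∈ S, 4 ^ (lvl a x) with hw
  obtain ⟨M, hM, hmax⟩ := Set.Finite.exists_maximalFor w ℬ (Set.toFinite ℬ) hne
  have hmax' : ∀ S ∈ ℬ, w S ≤ w M := by
    intro S hS
    by_contra hlt
    push_neg at hlt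
    have := hmax hS hlt.le
    omega
  refine ⟨M, hM, ?_⟩
  obtain ⟨hMcard, hMadm⟩ := hadm M hM
  suffices h : ∀ c, ∀ S ∈ ℬ, (symmDiff S M).card ≤ c → GaleLe (BnLe a) S M by
    intro S hS; exact h _ S hS le_rfl
  intro c
  induction c with
  | zero =>
    intro S hS h0
    have h1 : symmDiff S M = ∅ := Finset.card_eq_zero.mp (Nat.le_zero.mp h0)
    have h2 : S = M := symmDiff_eq_bot.mp h1
    rw [h2]
    exact galele_refl M
  | succ c ih =>
    intro S hS hcard
    by_cases hc : (symmDiff S M).card ≤ c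
    · exact ih S hS hc
    have hne' : (symmDiff S M).Nonempty := Finset.card_pos.mp (by omega)
    obtain ⟨hScard, hSadm⟩ := hadm S hS
    have hclose : ∀ x ∈ symmDiff S M, Sum.swap x ∈ symmDiff S M := by
      intro x hx
      rw [Finset.mem_symmDiff] at hx ⊢
      rcases hx with ⟨h1, h2⟩ | ⟨h1, h2⟩
      · exact Or.inr ⟨(mem_or_swap_mem hMcard hMadm x).resolve_left h2,
          hSadm x h1⟩
      · exact Or.inl ⟨(mem_or_swap_mem hScard hSadm x).resolve_left h2,
          hMadm x h1⟩
    obtain ⟨i, hi, himax⟩ := Finset.exists_max_image (symmDiff S M) (lvl a) hne'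
    have hlti : ∀ x ∈ symmDiff S M, x ≠ i → lvl a x < lvl a i := by
      intro x hx hxi
      have h1 := himax x hx
      have h2 : lvl a x ≠ lvl a i := fun h => hxi (lvl_injective ha h)
      omega
    have hsii : Sum.swap i ∈ symmDiff S M := hclose i hi
    have hsilt : lvl a (Sum.swap i) < lvl a i := hlti _ hsii (swap_ne i)
    rcases Finset.mem_symmDiff.mp hi with ⟨hiS, hiM⟩ | ⟨hiM, hiS⟩
    · -- contradiction case : i ∈ S, i ∉ M
      exfalso
      obtain ⟨j, hj, hM'⟩ := hex M hM S hS i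
        (Finset.mem_symmDiff.mpr (Or.inr ⟨hiS, hiM⟩))
      set T : Finset (Fin n ⊕ Fin n) := {i, j, Sum.swap i, Sum.swap j} with hT
      have hswapiM : Sum.swap i ∈ M := (mem_or_swap_mem hMcard hMadm i).resolve_left hiM
      have hjSM : j ∈ symmDiff S M := hj
      obtain ⟨jM, hjMM, hjMor⟩ : ∃ jm, jm ∈ M ∧ (jm = j ∨ jm = Sum.swap j) := by
        by_cases hjm : j ∈ M
        · exact ⟨j, hjm, Or.inl rfl⟩
        · exact ⟨Sum.swap j, (mem_or_swap_mem hMcard hMadm j).resolve_left hjm,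
            Or.inr rfl⟩
      have hjMne : jM ≠ i := fun h => hiM (h ▸ hjMM)
      have hjMSM : jM ∈ symmDiff S M := by
        rcases hjMor with h | h
        · rw [h]; exact hjSM
        · rw [h]; exact hclose j hjSM
      have hsjMSM : Sum.swap jM ∈ symmDiff S M := hclose jM hjMSM
      have hsjMnM : Sum.swap jM ∉ M := hMadm jM hjMM
      have hjMlt : lvl a jM < lvl a i := hlti _ hjMSM hjMne
      have hwM : w M = w (M \ T) + w (M ∩ T) := by
        conv_lhs => rw [← Finset.sdiff_union_inter M T]
        exact Finset.sum_union (Finset.disjoint_sdiff_inter M T)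
      have hwMT : w (symmDiff M T) = w (M \ T) + w (T \ M) := by
        rw [symmDiff_def]
        exact Finset.sum_union disjoint_sdiff_sdiff
      have hkey : w (M ∩ T) < w (T \ M) := by
        by_cases hpair : jM = Sum.swap i
        · have hTeq : T = {i, Sum.swap i} := by
            rcases hjMor with h | h
            · rw [h] at hpair; subst hpair
              ext x; simp only [hT, Finset.mem_insert, Finset.mem_singleton, Sum.swap_swap]; tauto
            · have : j = i := by
                apply Sum.swap_leftInverse.injective
                rw [← h, hpair]
              subst this
              ext x; simp only [hT, Finset.mem_insert, Finset.mem_singleton]; tauto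
          have h1 : M ∩ T = {Sum.swap i} := by
            ext x
            simp only [Finset.mem_inter, hTeq, Finset.mem_insert,
              Finset.mem_singleton]
            constructor
            · rintro ⟨hxM, rfl | rfl⟩
              · exact absurd hxM hiM
              · rfl
            · rintro rfl; exact ⟨hswapiM, Or.inr rfl⟩
          have h2 : T \ M = {i} := by
            ext x
            simp only [Finset.mem_sdiff, hTeq, Finset.mem_insert,
              Finset.mem_singleton]
            constructor
            · rintro ⟨rfl | rfl, hxM⟩
              · rfl
              · exact absurd hswapiM hxM
            · rintro rfl; exact ⟨Or.inl rfl, hiM⟩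
          rw [h1, h2, hw]
          simp only [Finset.sum_singleton]
          exact Nat.pow_lt_pow_right (by norm_num) hsilt
        · have d3 : Sum.swap jM ≠ i := by
            intro h
            apply hpair
            rw [← h, Sum.swap_swap]
          have d4 : Sum.swap jM ≠ Sum.swap i :=
            fun h => hjMne (Sum.swap_leftInverse.injective h)
          have hjMT : jM ∈ T := by
            rcases hjMor with h | h <;> simp [hT, h]
          have hsjMT : Sum.swap jM ∈ T := by
            rcases hjMor with h | h
            · simp [hT, h]
            · rw [h, Sum.swap_swap]; simp [hT]
          have hjeq : j = jM ∨ j = Sum.swap jM := by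
            rcases hjMor with h | h
            · exact Or.inl h.symm
            · right; rw [h, Sum.swap_swap]
          have hTmem : ∀ x ∈ T, x = i ∨ x = Sum.swap i ∨ x = jM ∨ x = Sum.swap jM := by
            intro x hx
            simp only [hT, Finset.mem_insert, Finset.mem_singleton] at hx
            rcases hjeq with h | h <;> rw [h] at hx
            · tauto
            · rw [Sum.swap_swap] at hx
              tauto
          have h1 : M ∩ T = {Sum.swap i, jM} := by
            ext x
            simp only [Finset.mem_inter, Finset.mem_insert, Finset.mem_singleton]
            constructor
            · rintro ⟨hxM, hxT⟩
              rcases hTmem x hxT with rfl | rfl | rfl | rfl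
              · exact absurd hxM hiM
              · exact Or.inl rfl
              · exact Or.inr rfl
              · exact absurd hxM hsjMnM
            · rintro (rfl | rfl)
              · exact ⟨hswapiM, by simp [hT]⟩
              · exact ⟨hjMM, hjMT⟩
          have h2 : T \ M = {i, Sum.swap jM} := by
            ext x
            simp only [Finset.mem_sdiff, Finset.mem_insert, Finset.mem_singleton]
            constructor
            · rintro ⟨hxT, hxM⟩
              rcases hTmem x hxT with rfl | rfl | rfl | rfl
              · exact Or.inl rfl
              · exact absurd hswapiM hxM
              · exact absurd hjMM hxM
              · exact Or.inr rfl
            · rintro (rfl | rfl)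
              · exact ⟨by simp [hT], hiM⟩
              · exact ⟨hsjMT, hsjMnM⟩
          rw [h1, h2]
          simp only [hw]
          rw [Finset.sum_pair (Ne.symm hpair), Finset.sum_pair (Ne.symm d3)]
          have e1 : 4 ^ (lvl a (Sum.swap i)) ≤ 4 ^ (lvl a i - 1) :=
            Nat.pow_le_pow_right (by norm_num) (by omega)
          have e2 : 4 ^ (lvl a jM) ≤ 4 ^ (lvl a i - 1) :=
            Nat.pow_le_pow_right (by norm_num) (by omega)
          have e3 : 4 ^ (lvl a i - 1) * 4 = 4 ^ (lvl a i) := by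
            rw [← pow_succ]
            congr 1
            omega
          have e4 : 0 < 4 ^ (lvl a i - 1) := Nat.pow_pos (by norm_num)
          generalize hH : (4:ℕ) ^ (lvl a i - 1) = H at e1 e2 e3 e4
          generalize hA : (4:ℕ) ^ lvl a (Sum.swap i) = A at e1 ⊢
          generalize hB : (4:ℕ) ^ lvl a jM = B at e2 ⊢
          generalize hC : (4:ℕ) ^ lvl a i = C at e3 ⊢
          generalize hD : (4:ℕ) ^ lvl a (Sum.swap jM) = D
          omega
      have hle := hmax' _ hM'
      omega
    · -- progress case : i ∈ M, i ∉ S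
      obtain ⟨j, hj, hS'⟩ := hex S hS M hM i
        (Finset.mem_symmDiff.mpr (Or.inr ⟨hiM, hiS⟩))
      rw [symmDiff_comm M S] at hj
      set T : Finset (Fin n ⊕ Fin n) := {i, j, Sum.swap i, Sum.swap j} with hT
      have hTsub : T ⊆ symmDiff S M := by
        intro x hx
        simp only [hT, Finset.mem_insert, Finset.mem_singleton] at hx
        rcases hx with rfl | rfl | rfl | rfl
        · exact hi
        · exact hj
        · exact hclose i hi
        · exact hclose j hj
      have hcard' : (symmDiff (symmDiff S T) M).card ≤ c := by
        have h1 : symmDiff (symmDiff S T) M = (symmDiff S M) \ T := by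
          rw [symmDiff_right_comm, symmDiff_eq_sup_sdiff_inf,
            sup_eq_left.mpr hTsub, inf_eq_right.mpr hTsub]
        rw [h1, Finset.card_sdiff_of_subset hTsub]
        have h2 : 0 < T.card := Finset.card_pos.mpr ⟨i, by simp [hT]⟩
        omega
      refine galele_trans ?_ (ih _ hS' hcard')
      -- now : GaleLe (BnLe a) S (symmDiff S T)
      have hswapiS : Sum.swap i ∈ S := (mem_or_swap_mem hScard hSadm i).resolve_left hiS
      obtain ⟨jS, hjSS, hjSor⟩ : ∃ js, js ∈ S ∧ (js = j ∨ js = Sum.swap j) := by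
        by_cases hjs : j ∈ S
        · exact ⟨j, hjs, Or.inl rfl⟩
        · exact ⟨Sum.swap j, (mem_or_swap_mem hScard hSadm j).resolve_left hjs,
            Or.inr rfl⟩
      have hjSne : jS ≠ i := fun h => hiS (h ▸ hjSS)
      have hjSSM : jS ∈ symmDiff S M := by
        rcases hjSor with h | h
        · rw [h]; exact hj
        · rw [h]; exact hclose j hj
      have hsjSnS : Sum.swap jS ∉ S := hSadm jS hjSS
      have hiT : i ∈ T := by simp [hT]
      by_cases hpair : jS = Sum.swap i
      · have hTeq : T = {i, Sum.swap i} := by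
          rcases hjSor with h | h
          · rw [h] at hpair; subst hpair
            ext x; simp only [hT, Finset.mem_insert, Finset.mem_singleton, Sum.swap_swap]; tauto
          · have : j = i := by
              apply Sum.swap_leftInverse.injective
              rw [← h, hpair]
            subst this
            ext x; simp only [hT, Finset.mem_insert, Finset.mem_singleton]; tauto
        refine ⟨Equiv.swap i (Sum.swap i), ?_, ?_⟩ <;> intro x hx <;>
          by_cases hxsi : x = Sum.swap i
        · subst hxsi
          rw [Equiv.swap_apply_right]
          rw [Finset.mem_symmDiff]
          exact Or.inr ⟨hiT, hiS⟩
        · have hxi : x ≠ i := fun h => hiS (h ▸ hx)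
          rw [Equiv.swap_apply_of_ne_of_ne hxi hxsi]
          rw [Finset.mem_symmDiff]
          refine Or.inl ⟨hx, ?_⟩
          rw [hTeq]
          simp [hxi, hxsi]
        · subst hxsi
          rw [Equiv.swap_apply_right]
          exact Or.inr hsilt
        · have hxi : x ≠ i := fun h => hiS (h ▸ hx)
          rw [Equiv.swap_apply_of_ne_of_ne hxi hxsi]
          exact Or.inl rfl
      · -- distinct pairs
        have d3 : Sum.swap jS ≠ i := by
          intro h
          apply hpair
          rw [← h, Sum.swap_swap]
        have d4 : Sum.swap jS ≠ Sum.swap i :=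
          fun h => hjSne (Sum.swap_leftInverse.injective h)
        have hjST : jS ∈ T := by
          rcases hjSor with h | h <;> simp [hT, h]
        have hsjST : Sum.swap jS ∈ T := by
          rcases hjSor with h | h
          · simp [hT, h]
          · rw [h, Sum.swap_swap]; simp [hT]
        have hjeq : j = jS ∨ j = Sum.swap jS := by
          rcases hjSor with h | h
          · exact Or.inl h.symm
          · right; rw [h, Sum.swap_swap]
        have hTmem : ∀ x ∈ T, x = i ∨ x = Sum.swap i ∨ x = jS ∨ x = Sum.swap jS := by
          intro x hx
          simp only [hT, Finset.mem_insert, Finset.mem_singleton] at hx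
          rcases hjeq with h | h <;> rw [h] at hx
          · tauto
          · rw [Sum.swap_swap] at hx
            tauto
        have hjSlt : lvl a jS < lvl a i := hlti _ hjSSM hjSne
        by_cases hl : lvl a jS < lvl a (Sum.swap jS)
        · refine ⟨(Equiv.swap jS (Sum.swap jS)).trans (Equiv.swap i (Sum.swap i)), ?_, ?_⟩ <;>
            intro x hx <;>
            simp only [Equiv.trans_apply]
          · by_cases hxsi : x = Sum.swap i
            · subst hxsi
              rw [Equiv.swap_apply_of_ne_of_ne (fun h => hpair h.symm) d4.symm,
                Equiv.swap_apply_right]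
              rw [Finset.mem_symmDiff]
              exact Or.inr ⟨hiT, hiS⟩
            · by_cases hxj : x = jS
              · subst hxj
                rw [Equiv.swap_apply_left, Equiv.swap_apply_of_ne_of_ne d3 d4]
                rw [Finset.mem_symmDiff]
                exact Or.inr ⟨hsjST, hsjSnS⟩
              · have hxi : x ≠ i := fun h => hiS (h ▸ hx)
                have hxsj : x ≠ Sum.swap jS := fun h => hsjSnS (h ▸ hx)
                rw [Equiv.swap_apply_of_ne_of_ne hxj hxsj,
                  Equiv.swap_apply_of_ne_of_ne hxi hxsi]
                rw [Finset.mem_symmDiff]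
                refine Or.inl ⟨hx, fun hxT => ?_⟩
                rcases hTmem x hxT with rfl | rfl | rfl | rfl <;> simp_all
          · by_cases hxsi : x = Sum.swap i
            · subst hxsi
              rw [Equiv.swap_apply_of_ne_of_ne (fun h => hpair h.symm) d4.symm,
                Equiv.swap_apply_right]
              exact Or.inr hsilt
            · by_cases hxj : x = jS
              · subst hxj
                rw [Equiv.swap_apply_left, Equiv.swap_apply_of_ne_of_ne d3 d4]
                exact Or.inr hl
              · have hxi : x ≠ i := fun h => hiS (h ▸ hx)
                have hxsj : x ≠ Sum.swap jS := fun h => hsjSnS (h ▸ hx)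
                rw [Equiv.swap_apply_of_ne_of_ne hxj hxsj,
                  Equiv.swap_apply_of_ne_of_ne hxi hxsi]
                exact Or.inl rfl
        · have hl' : lvl a (Sum.swap jS) < lvl a jS := by
            have hne2 : lvl a (Sum.swap jS) ≠ lvl a jS :=
              fun h => (swap_ne jS) (lvl_injective ha h)
            omega
          have hswlt : lvl a (Sum.swap i) < lvl a (Sum.swap jS) := by
            rw [lvl_swap ha, lvl_swap ha]
            have b1 := lvl_lt ha i
            have b2 := lvl_lt ha jS
            omega
          refine ⟨(Equiv.swap i jS).trans (Equiv.swap (Sum.swap i) (Sum.swap jS)), ?_, ?_⟩ <;>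
            intro x hx <;>
            simp only [Equiv.trans_apply]
          · by_cases hxsi : x = Sum.swap i
            · subst hxsi
              rw [Equiv.swap_apply_of_ne_of_ne (swap_ne i) (fun h => hpair h.symm),
                Equiv.swap_apply_left]
              rw [Finset.mem_symmDiff]
              exact Or.inr ⟨hsjST, hsjSnS⟩
            · by_cases hxj : x = jS
              · subst hxj
                rw [Equiv.swap_apply_right,
                  Equiv.swap_apply_of_ne_of_ne (Ne.symm (swap_ne i)) (Ne.symm d3)]
                rw [Finset.mem_symmDiff]
                exact Or.inr ⟨hiT, hiS⟩
              · have hxi : x ≠ i := fun h => hiS (h ▸ hx)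
                have hxsj : x ≠ Sum.swap jS := fun h => hsjSnS (h ▸ hx)
                rw [Equiv.swap_apply_of_ne_of_ne hxi hxj,
                  Equiv.swap_apply_of_ne_of_ne hxsi hxsj]
                rw [Finset.mem_symmDiff]
                refine Or.inl ⟨hx, fun hxT => ?_⟩
                rcases hTmem x hxT with rfl | rfl | rfl | rfl <;> simp_all
          · by_cases hxsi : x = Sum.swap i
            · subst hxsi
              rw [Equiv.swap_apply_of_ne_of_ne (swap_ne i) (fun h => hpair h.symm),
                Equiv.swap_apply_left]
              exact Or.inr hswlt
            · by_cases hxj : x = jS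
              · subst hxj
                rw [Equiv.swap_apply_right,
                  Equiv.swap_apply_of_ne_of_ne (Ne.symm (swap_ne i)) (Ne.symm d3)]
                exact Or.inr hjSlt
              · have hxi : x ≠ i := fun h => hiS (h ▸ hx)
                have hxsj : x ≠ Sum.swap jS := fun h => hsjSnS (h ▸ hx)
                rw [Equiv.swap_apply_of_ne_of_ne hxi hxj,
                  Equiv.swap_apply_of_ne_of_ne hxsi hxsj]
                exact Or.inl rfl


set_option maxHeartbeats 2000000 in
lemma max_to_exchange_core (ℬ : Set (Finset (Fin n ⊕ Fin n)))
    (hadm : ∀ S ∈ ℬ, S.card = n ∧ JAdmissible S)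
    (hmax : ∀ a : Fin n → Fin n ⊕ Fin n, IsAdmissibleTuple a →
      ∃ M ∈ ℬ, ∀ S ∈ ℬ, GaleLe (BnLe a) S M)
    (A B : Finset (Fin n ⊕ Fin n)) (hA : A ∈ ℬ) (hB : B ∈ ℬ)
    (i : Fin n ⊕ Fin n) (hiA : i ∈ A) (hiB : i ∉ B)
    (hforb : ∀ j ∈ symmDiff A B, symmDiff A {i, j, Sum.swap i, Sum.swap j} ∉ ℬ) :
    False := by
  classical
  obtain ⟨hAcard, hAadm⟩ := hadm A hA
  obtain ⟨hBcard, hBadm⟩ := hadm B hB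
  have hsiA : Sum.swap i ∉ A := hAadm i hiA
  have hsiB : Sum.swap i ∈ B := (mem_or_swap_mem hBcard hBadm i).resolve_left hiB
  set A' : Finset (Fin n ⊕ Fin n) := insert (Sum.swap i) (A.erase i) with hA'
  have hiA'n : i ∉ A' := by
    rw [hA', Finset.mem_insert]
    rintro (h | h)
    · exact hsiA (h ▸ hiA)
    · exact (Finset.mem_erase.mp h).1 rfl
  have hnpos : 0 < n := by
    rw [← hAcard]
    exact Finset.card_pos.mpr ⟨i, hiA⟩
  have hA'card : A'.card = n := by
    rw [hA', Finset.card_insert_of_notMem (fun h => hsiA (Finset.mem_erase.mp h).2),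
      Finset.card_erase_of_mem hiA, hAcard]
    omega
  have hA'adm : JAdmissible A' := by
    intro x hx hx2
    rw [hA', Finset.mem_insert] at hx hx2
    rcases hx with rfl | hx
    · rcases hx2 with h | h
      · exact swap_ne i (Sum.swap_leftInverse.injective h)
      · rw [Sum.swap_swap] at h
        exact (Finset.mem_erase.mp h).1 rfl
    · rcases hx2 with h | h
      · have : x = i := by
          apply Sum.swap_leftInverse.injective
          exact h
        exact (Finset.mem_erase.mp hx).1 this
      · exact hAadm x (Finset.mem_erase.mp hx).2 (Finset.mem_erase.mp h).2
  -- the list and the enumeration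
  have hiAB : i ∈ A \ B := Finset.mem_sdiff.mpr ⟨hiA, hiB⟩
  set m := (A ∩ B).card with hm
  set l1 := (A ∩ B).toList with hl1
  set l2 := ((A \ B).erase i).toList with hl2
  set L : List (Fin n ⊕ Fin n) := l1 ++ Sum.swap i :: l2 with hLdef
  have hl1len : l1.length = m := Finset.length_toList _
  have hl2len : l2.length = (A \ B).card - 1 := by
    rw [hl2, Finset.length_toList, Finset.card_erase_of_mem hiAB]
  have hdpos : 0 < (A \ B).card := Finset.card_pos.mpr ⟨i, hiAB⟩
  have hcardsplit : m + (A \ B).card = n := by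
    have h := Finset.card_inter_add_card_sdiff A B
    omega
  have hLlen : L.length = n := by
    rw [hLdef, List.length_append, List.length_cons, hl1len, hl2len]
    omega
  have hmn : m < n := by omega
  have hLnd : L.Nodup := by
    rw [hLdef, List.nodup_append]
    refine ⟨Finset.nodup_toList _, ?_, ?_⟩
    · rw [List.nodup_cons]
      constructor
      · rw [hl2, Finset.mem_toList, Finset.mem_erase]
        rintro ⟨-, h⟩
        exact hsiA (Finset.mem_sdiff.mp h).1
      · exact Finset.nodup_toList _
    · intro x hx1 y hx2 hxy
      subst hxy
      rw [hl1, Finset.mem_toList, Finset.mem_inter] at hx1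
      rcases List.mem_cons.mp hx2 with rfl | hx2
      · exact hsiA hx1.1
      · rw [hl2, Finset.mem_toList, Finset.mem_erase, Finset.mem_sdiff] at hx2
        exact hx2.2.2 hx1.2
  set e : Fin n → Fin n ⊕ Fin n :=
    fun k => L[(k : ℕ)]'(by rw [hLlen]; exact k.isLt) with he
  have he_inj : Function.Injective e := by
    have h1 := List.nodup_iff_injective_getElem.mp hLnd
    intro k l h
    have lk : (k : ℕ) < L.length := by rw [hLlen]; exact k.isLt
    have ll : (l : ℕ) < L.length := by rw [hLlen]; exact l.isLt
    have h2 := h1 (a₁ := ⟨(k : ℕ), lk⟩) (a₂ := ⟨(l : ℕ), ll⟩) h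
    have h3 : (k : ℕ) = (l : ℕ) := Fin.mk_eq_mk.mp h2
    exact Fin.ext h3
  have he_lt : ∀ k : Fin n, (k : ℕ) < m → e k ∈ A ∩ B := by
    intro k hk
    have h1 : (k : ℕ) < l1.length := by omega
    have h2 : e k = l1[(k : ℕ)] := List.getElem_append_left h1
    rw [h2, ← Finset.mem_toList, ← hl1]
    exact List.getElem_mem h1
  have he_eq : ∀ k : Fin n, (k : ℕ) = m → e k = Sum.swap i := by
    intro k hk
    have h1 : l1.length ≤ (k : ℕ) := by omega
    have h2 : e k = (Sum.swap i :: l2)[(k : ℕ) - l1.length]'(by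
        rw [List.length_cons]
        have : (k : ℕ) < L.length := by rw [hLlen]; exact k.isLt
        rw [hLdef, List.length_append, List.length_cons] at this
        omega) := List.getElem_append_right h1
    rw [h2]
    have h3 : (k : ℕ) - l1.length = 0 := by omega
    simp only [h3, List.getElem_cons_zero]
  have he_gt : ∀ k : Fin n, m < (k : ℕ) → e k ∈ (A \ B).erase i := by
    intro k hk
    have h1 : l1.length ≤ (k : ℕ) := by omega
    have hkL : (k : ℕ) < L.length := by rw [hLlen]; exact k.isLt
    have hcons : (k : ℕ) - l1.length < (Sum.swap i :: l2).length := by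
      rw [hLdef, List.length_append] at hkL
      omega
    have h2 : e k = (Sum.swap i :: l2)[(k : ℕ) - l1.length]'hcons :=
      List.getElem_append_right h1
    have h3 : (k : ℕ) - l1.length = ((k : ℕ) - l1.length - 1) + 1 := by omega
    rw [h2]
    have h4 : ((k : ℕ) - l1.length - 1) + 1 < (Sum.swap i :: l2).length := by omega
    have h5 : (Sum.swap i :: l2)[(k : ℕ) - l1.length]'hcons
        = (Sum.swap i :: l2)[((k : ℕ) - l1.length - 1) + 1]'h4 := by
      congr 1
    rw [h5, List.getElem_cons_succ, ← Finset.mem_toList, ← hl2]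
    exact List.getElem_mem _
  have he_mem : ∀ k : Fin n, e k ∈ A' := by
    intro k
    rcases lt_trichotomy ((k : ℕ)) m with h | h | h
    · have := he_lt k h
      rw [Finset.mem_inter] at this
      rw [hA', Finset.mem_insert, Finset.mem_erase]
      exact Or.inr ⟨fun hh => hiB (hh ▸ this.2), this.1⟩
    · rw [he_eq k h, hA']
      exact Finset.mem_insert_self _ _
    · have := he_gt k h
      rw [Finset.mem_erase, Finset.mem_sdiff] at this
      rw [hA', Finset.mem_insert, Finset.mem_erase]
      exact Or.inr ⟨this.1, this.2.1⟩
  have himg : Finset.univ.image e = A' := by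
    apply Finset.eq_of_subset_of_card_le
    · intro x hx
      obtain ⟨k, -, rfl⟩ := Finset.mem_image.mp hx
      exact he_mem k
    · rw [hA'card, Finset.card_image_of_injective _ he_inj, Finset.card_univ,
        Fintype.card_fin]
  set a : Fin n → Fin n ⊕ Fin n := fun k => Sum.swap (e k) with ha_def
  have hswap_a : ∀ k, Sum.swap (a k) = e k := fun k => Sum.swap_swap (e k)
  have ha : IsAdmissibleTuple a := by
    constructor
    · intro k l h
      exact he_inj (Sum.swap_leftInverse.injective h)
    · intro k l h
      have h2 : Sum.swap (e k) = e l := h.trans (hswap_a l)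
      refine hA'adm (e k) (he_mem k) ?_
      rw [h2]
      exact he_mem l
  have hlv1 : ∀ k : Fin n, lvl a (e k) = 2 * n - 1 - (k : ℕ) := by
    intro k
    rw [← hswap_a k]
    exact lvl_swap_apply ha k
  obtain ⟨M, hM, hdom⟩ := hmax a ha
  obtain ⟨hMcard, hMadm⟩ := hadm M hM
  have hHI : ∀ (x : Fin n ⊕ Fin n) (k : ℕ), k < n →
      (2 * n - 1 - k ≤ lvl a x ↔ ∃ j : Fin n, (j : ℕ) ≤ k ∧ x = e j) := by
    intro x k hk
    constructor
    · intro hx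
      obtain ⟨l, hl | hl⟩ := cover ha x
      · rw [← hl, lvl_apply ha] at hx
        have := l.isLt
        exact absurd hx (by omega)
      · have hx' : x = Sum.swap (a l) := by rw [hl, Sum.swap_swap]
        rw [hx', lvl_swap_apply ha] at hx
        have := l.isLt
        refine ⟨l, by omega, ?_⟩
        rw [hx', hswap_a]
    · rintro ⟨j, hj, rfl⟩
      rw [hlv1]
      have := j.isLt
      omega
  -- Step 1 : the top m+1 elements (A ∩ B and swap i) all belong to M
  have hstep1 : ∀ k : Fin n, (k : ℕ) ≤ m → e k ∈ M := by
    set Dm := (Finset.univ.filter (fun j : Fin n => (j : ℕ) ≤ m)).image e with hDm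
    have hDmB : Dm ⊆ B.filter (fun x => 2 * n - 1 - m ≤ lvl a x) := by
      intro x hx
      rw [hDm, Finset.mem_image] at hx
      obtain ⟨j, hj, rfl⟩ := hx
      rw [Finset.mem_filter] at hj
      refine Finset.mem_filter.mpr ⟨?_, by rw [hlv1]; have := j.isLt; omega⟩
      rcases lt_trichotomy ((j : ℕ)) m with h | h | h
      · exact (Finset.mem_inter.mp (he_lt j h)).2
      · rw [he_eq j h]; exact hsiB
      · exact absurd hj.2 (by omega)
    have h2 := count_le (hdom B hB) (2 * n - 1 - m)
    have h3 : M.filter (fun x => 2 * n - 1 - m ≤ lvl a x) ⊆ Dm := by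
      intro x hx
      obtain ⟨hxM, hxl⟩ := Finset.mem_filter.mp hx
      obtain ⟨j, hj, rfl⟩ := (hHI x m hmn).mp hxl
      rw [hDm, Finset.mem_image]
      exact ⟨j, Finset.mem_filter.mpr ⟨Finset.mem_univ _, hj⟩, rfl⟩
    have h4 : M.filter (fun x => 2 * n - 1 - m ≤ lvl a x) = Dm :=
      Finset.eq_of_subset_of_card_le h3
        (le_trans (Finset.card_le_card hDmB) h2)
    intro k hk
    have h5 : e k ∈ Dm := by
      rw [hDm, Finset.mem_image]
      exact ⟨k, Finset.mem_filter.mpr ⟨Finset.mem_univ _, hk⟩, rfl⟩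
    rw [← h4] at h5
    exact (Finset.mem_filter.mp h5).1
  have hswapiM : Sum.swap i ∈ M := by
    have h1 := hstep1 ⟨m, hmn⟩ (le_refl m)
    rwa [he_eq ⟨m, hmn⟩ rfl] at h1
  -- Step 2 : M misses at most one element of A'
  have hstep2 : n - 1 ≤ (M ∩ A').card := by
    have hAf : A.erase i ⊆ A.filter (fun x => n ≤ lvl a x) := by
      intro x hx
      have hxA' : x ∈ A' := by
        rw [hA']
        exact Finset.mem_insert.mpr (Or.inr hx)
      have hxe : x ∈ Finset.univ.image e := by rw [himg]; exact hxA'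
      obtain ⟨j, -, rfl⟩ := Finset.mem_image.mp hxe
      refine Finset.mem_filter.mpr ⟨Finset.mem_of_mem_erase hx, ?_⟩
      rw [hlv1]
      have := j.isLt
      omega
    have h2 := count_le (hdom A hA) n
    have h3 : M.filter (fun x => n ≤ lvl a x) ⊆ M ∩ A' := by
      intro x hx
      obtain ⟨hxM, hxl⟩ := Finset.mem_filter.mp hx
      have hxl' : 2 * n - 1 - (n - 1) ≤ lvl a x := by omega
      obtain ⟨j, -, rfl⟩ := (hHI x (n - 1) (by omega)).mp hxl'
      refine Finset.mem_inter.mpr ⟨hxM, ?_⟩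
      rw [← himg]
      exact Finset.mem_image_of_mem e (Finset.mem_univ j)
    calc n - 1 = (A.erase i).card := by rw [Finset.card_erase_of_mem hiA, hAcard]
      _ ≤ (A.filter (fun x => n ≤ lvl a x)).card := Finset.card_le_card hAf
      _ ≤ (M.filter (fun x => n ≤ lvl a x)).card := h2
      _ ≤ (M ∩ A').card := Finset.card_le_card h3
  -- Final case analysis
  by_cases hful : A' ⊆ M
  · have hMA' : A' = M :=
      Finset.eq_of_subset_of_card_le hful (by rw [hMcard, hA'card])
    refine hforb i (Finset.mem_symmDiff.mpr (Or.inl ⟨hiA, hiB⟩)) ?_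
    have hset : ({i, i, Sum.swap i, Sum.swap i} : Finset (Fin n ⊕ Fin n))
        = {i, Sum.swap i} := by
      ext x
      simp only [Finset.mem_insert, Finset.mem_singleton]
      tauto
    have hsd : symmDiff A {i, Sum.swap i} = A' := by
      ext x
      rw [Finset.mem_symmDiff]
      simp only [Finset.mem_insert, Finset.mem_singleton, hA', Finset.mem_erase]
      constructor
      · rintro (⟨hxA, hx2⟩ | ⟨(rfl | rfl), hx2⟩)
        · exact Or.inr ⟨fun h => hx2 (Or.inl h), hxA⟩
        · exact absurd hiA hx2
        · exact Or.inl rfl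
      · rintro (rfl | ⟨hx1, hx2⟩)
        · exact Or.inr ⟨Or.inr rfl, hsiA⟩
        · refine Or.inl ⟨hx2, ?_⟩
          rintro (rfl | rfl)
          · exact hx1 rfl
          · exact hsiA hx2
    rw [hset, hsd, hMA']
    exact hM
  · -- there is exactly one element y of A' missing from M
    have h5 : (A' \ M).Nonempty := by
      rw [Finset.sdiff_nonempty]
      exact hful
    have hMA'le : (M ∩ A').card ≤ n :=
      le_trans (Finset.card_le_card Finset.inter_subset_left) (le_of_eq hMcard)
    have hA'Mcomm : (A' ∩ M).card = (M ∩ A').card := by rw [Finset.inter_comm]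
    have hc1 := Finset.card_sdiff_add_card_inter A' M
    have hc2 := Finset.card_sdiff_add_card_inter M A'
    have hMA'ne : (M ∩ A').card ≠ n := by
      intro h
      apply hful
      intro y hy
      by_contra hyM
      have h7 : 0 < (A' \ M).card :=
        Finset.card_pos.mpr ⟨y, Finset.mem_sdiff.mpr ⟨hy, hyM⟩⟩
      omega
    have h6 : (A' \ M).card = 1 := by
      rw [hA'card] at hc1
      omega
    obtain ⟨y, hy⟩ := Finset.card_eq_one.mp h6
    have hyA'M : y ∈ A' \ M := by rw [hy]; exact Finset.mem_singleton_self y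
    have hyA' : y ∈ A' := (Finset.mem_sdiff.mp hyA'M).1
    have hyM : y ∉ M := (Finset.mem_sdiff.mp hyA'M).2
    have hysi : y ≠ Sum.swap i := by
      rintro rfl
      exact hyM hswapiM
    have hyAe : y ∈ A.erase i := by
      rcases Finset.mem_insert.mp (hA' ▸ hyA') with h | h
      · exact absurd h hysi
      · exact h
    have hyA : y ∈ A := (Finset.mem_erase.mp hyAe).2
    have hyi : y ≠ i := (Finset.mem_erase.mp hyAe).1
    have hsyA : Sum.swap y ∉ A := hAadm y hyA
    have hyB : y ∉ B := by
      intro hyB'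
      have hxe : y ∈ Finset.univ.image e := by rw [himg]; exact hyA'
      obtain ⟨j, -, hj⟩ := Finset.mem_image.mp hxe
      rcases lt_trichotomy ((j : ℕ)) m with h | h | h
      · exact hyM (hj ▸ hstep1 j h.le)
      · exact hysi (hj ▸ he_eq j h)
      · have h7 := he_gt j h
        rw [hj] at h7
        exact (Finset.mem_sdiff.mp (Finset.mem_of_mem_erase h7)).2 hyB'
    -- the unique element of M outside A' is swap y
    have h10 : (M \ A').card = 1 := by
      rw [hMcard] at hc2
      rw [hA'card] at hc1
      omega
    obtain ⟨z, hz⟩ := Finset.card_eq_one.mp h10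
    have hzMA' : z ∈ M \ A' := by rw [hz]; exact Finset.mem_singleton_self z
    have hzM : z ∈ M := (Finset.mem_sdiff.mp hzMA').1
    have hzA' : z ∉ A' := (Finset.mem_sdiff.mp hzMA').2
    have hszA' : Sum.swap z ∈ A' := (mem_or_swap_mem hA'card hA'adm z).resolve_left hzA'
    have hszM : Sum.swap z ∉ M := hMadm z hzM
    have hszy : Sum.swap z = y := by
      have : Sum.swap z ∈ A' \ M := Finset.mem_sdiff.mpr ⟨hszA', hszM⟩
      rw [hy] at this
      exact Finset.mem_singleton.mp this
    have hzsy : z = Sum.swap y := by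
      rw [← hszy, Sum.swap_swap]
    have hsyM : Sum.swap y ∈ M := hzsy ▸ hzM
    have hMchar : ∀ x, x ∈ M ↔ ((x ∈ A' ∧ x ≠ y) ∨ x = Sum.swap y) := by
      intro x
      constructor
      · intro hxM
        by_cases hxA' : x ∈ A'
        · exact Or.inl ⟨hxA', fun h => hyM (h ▸ hxM)⟩
        · right
          have : x ∈ M \ A' := Finset.mem_sdiff.mpr ⟨hxM, hxA'⟩
          rw [hz] at this
          rw [Finset.mem_singleton.mp this, hzsy]
      · rintro (⟨hxA', hxy⟩ | rfl)
        · by_contra hxM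
          have : x ∈ A' \ M := Finset.mem_sdiff.mpr ⟨hxA', hxM⟩
          rw [hy] at this
          exact hxy (Finset.mem_singleton.mp this)
        · exact hsyM
    refine hforb y (Finset.mem_symmDiff.mpr (Or.inl ⟨hyA, hyB⟩)) ?_
    have hMeq : symmDiff A {i, y, Sum.swap i, Sum.swap y} = M := by
      ext x
      rw [Finset.mem_symmDiff, hMchar x]
      simp only [Finset.mem_insert, Finset.mem_singleton, hA', Finset.mem_erase]
      constructor
      · rintro (⟨hxA, hxn⟩ | ⟨(rfl | rfl | rfl | rfl), hxA⟩)
        · refine Or.inl ⟨Or.inr ⟨?_, hxA⟩, ?_⟩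
          · intro h; exact hxn (Or.inl h)
          · intro h; exact hxn (Or.inr (Or.inl h))
        · exact absurd hiA hxA
        · exact absurd hyA hxA
        · exact Or.inl ⟨Or.inl rfl, Ne.symm hysi⟩
        · exact Or.inr rfl
      · rintro (⟨(rfl | ⟨hxi, hxA⟩), hxy⟩ | rfl)
        · exact Or.inr ⟨Or.inr (Or.inr (Or.inl rfl)), hsiA⟩
        · refine Or.inl ⟨hxA, ?_⟩
          rintro (rfl | rfl | rfl | rfl)
          · exact hxi rfl
          · exact hxy rfl
          · exact hsiA hxA
          · exact hsyA hxA
        · exact Or.inr ⟨Or.inr (Or.inr (Or.inr rfl)), hsyA⟩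
    rw [hMeq]
    exact hM

end LagAux

/-- Lagrangian symplectic matroids are exactly symmetric matroids: a nonempty
collection `ℬ` of admissible `n`-subsets of `J` has a Gale-maximal member for every
`B_n`-admissible ordering if and only if it satisfies the symmetric exchange axiom:
for `A, B ∈ ℬ` and `i ∈ A Δ B` there exists `j ∈ B Δ A` with
`A Δ {i, j, i*, j*} ∈ ℬ`. -/
theorem lagrangian_iff_symmetric_exchange {n : ℕ}
    (ℬ : Set (Finset (Fin n ⊕ Fin n))) (hne : ℬ.Nonempty)
    (hadm : ∀ S ∈ ℬ, S.card = n ∧ JAdmissible S) :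
    (∀ a : Fin n → Fin n ⊕ Fin n, IsAdmissibleTuple a →
      ∃ M ∈ ℬ, ∀ S ∈ ℬ, GaleLe (BnLe a) S M) ↔
    (∀ A ∈ ℬ, ∀ B ∈ ℬ, ∀ i ∈ symmDiff A B, ∃ j ∈ symmDiff B A,
      symmDiff A {i, j, Sum.swap i, Sum.swap j} ∈ ℬ) := by
  constructor
  · intro hmax A hA B hB i hi
    by_contra hcon
    push_neg at hcon
    obtain ⟨hAcard, hAadm⟩ := hadm A hA
    obtain ⟨hBcard, hBadm⟩ := hadm B hB
    have hcon' : ∀ j ∈ symmDiff A B, symmDiff A {i, j, Sum.swap i, Sum.swap j} ∉ ℬ := by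
      intro j hj
      exact hcon j (by rwa [symmDiff_comm])
    rcases Finset.mem_symmDiff.mp hi with ⟨h1, h2⟩ | ⟨h1, h2⟩
    · exact LagAux.max_to_exchange_core ℬ hadm hmax A B hA hB i h1 h2 hcon'
    · have h3 : Sum.swap i ∈ A := (LagAux.mem_or_swap_mem hAcard hAadm i).resolve_left h2
      have h4 : Sum.swap i ∉ B := hBadm i h1
      apply LagAux.max_to_exchange_core ℬ hadm hmax A B hA hB (Sum.swap i) h3 h4
      intro j hj
      have heq : ({Sum.swap i, j, Sum.swap (Sum.swap i), Sum.swap j} :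
          Finset (Fin n ⊕ Fin n)) = {i, j, Sum.swap i, Sum.swap j} := by
        rw [Sum.swap_swap]
        ext x
        simp only [Finset.mem_insert, Finset.mem_singleton]
        tauto
      rw [heq]
      exact hcon' j hj
  · intro hex a ha
    exact LagAux.exchange_to_max ℬ hne hadm hex a ha
end
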